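/- A function f ∈ V ⊗ ℂ(z_1,…,z_n,h) is skew-invariant with respect to the S_n^+-action (i.e. s_i^+ f = −f for all i = 1,…,n−1) if and only if the function Ď^{−1} f is invariant with respect to the S_n^+-action; similarly, f is skew-invariant with respect to the S_n^−-action if and only if D^{−1} f is invariant with respect to the S_n^−-action, where D = ∏_{1≤i<j≤n}(z_i−z_j+h) and Ď = ∏_{1≤i<j≤n}(z_j−z_i+h). -/

import Mathlib

open scoped BigOperators

noncomputable section

namespace GRTV

/-- The field `ℂ(z_1,…,z_n,h)` of rational functions. -/
abbrev K (n : ℕ) : Type := FractionRing (MvPolynomial (Fin n ⊕ Unit) ℂ)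

/-- The variable `z_i`. -/
def z {n : ℕ} (i : Fin n) : K n :=
  algebraMap (MvPolynomial (Fin n ⊕ Unit) ℂ) (K n) (MvPolynomial.X (Sum.inl i))

/-- The variable `h`. -/
def hvar {n : ℕ} : K n :=
  algebraMap (MvPolynomial (Fin n ⊕ Unit) ℂ) (K n) (MvPolynomial.X (Sum.inr ()))

/-- The field automorphism of `ℂ(z_1,…,z_n,h)` permuting the variables `z_i` by `σ`
(and fixing `h`); `f ↦ f^σ`. -/
def permK {n : ℕ} (σ : Equiv.Perm (Fin n)) : K n ≃+* K n :=
  IsFractionRing.ringEquivOfRingEquiv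
    (MvPolynomial.renameEquiv ℂ (Equiv.sumCongr σ (Equiv.refl Unit))).toRingEquiv

/-- `V ⊗ ℂ(z_1,…,z_n,h)` in coordinates: a vector is the family of its coordinates
in the basis `{v_I}`, where a basis index (a decomposition `I`) is recorded as the word
`m : Fin n → Fin N` with `I_j = m⁻¹(j)`. -/
abbrev VV (n N : ℕ) : Type := (Fin n → Fin N) → K n

/-- `h` for the `+` case (`ε = true`) and `-h` for the `−` case (`ε = false`). -/
def sign' {n : ℕ} (ε : Bool) : K n := if ε then hvar else -hvar

def fin1 {n : ℕ} (i : ℕ) (hi : i + 1 < n) : Fin n := ⟨i, Nat.lt_of_succ_lt hi⟩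
def fin2 {n : ℕ} (i : ℕ) (hi : i + 1 < n) : Fin n := ⟨i + 1, hi⟩

/-- The operator `s_i^±` (`ε = true` for `+`, `ε = false` for `−`):
`s_i^± f = ((z_i−z_{i+1})P^{(i,i+1)} ∓ h)/(z_i−z_{i+1}) · f^{s_i} ± h/(z_i−z_{i+1}) · f`.
Here `P^{(i,i+1)}` acts on coordinates by precomposing the word with the transposition,
and `f^{s_i}` applies `permK` coordinatewise. -/
def sOp {n N : ℕ} (ε : Bool) (i : ℕ) (hi : i + 1 < n) (f : VV n N) : VV n N :=
  fun m =>
    ((z (fin1 i hi) - z (fin2 i hi)) *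
          permK (Equiv.swap (fin1 i hi) (fin2 i hi))
            (f (m ∘ ⇑(Equiv.swap (fin1 i hi) (fin2 i hi))))
        - sign' ε * permK (Equiv.swap (fin1 i hi) (fin2 i hi)) (f m))
      / (z (fin1 i hi) - z (fin2 i hi))
    + sign' ε / (z (fin1 i hi) - z (fin2 i hi)) * f m

/-- `D = ∏_{1≤i<j≤n}(z_i−z_j+h)`. -/
def Dpoly (n : ℕ) : K n :=
  ∏ p ∈ Finset.univ.filter (fun p : Fin n × Fin n => p.1 < p.2), (z p.1 - z p.2 + hvar)

/-- `Ď = ∏_{1≤i<j≤n}(z_j−z_i+h)`. -/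
def Dcheck (n : ℕ) : K n :=
  ∏ p ∈ Finset.univ.filter (fun p : Fin n × Fin n => p.1 < p.2), (z p.2 - z p.1 + hvar)

/-!
For a fixed `i`, write `τ` for the transposition `(i, i+1)`, `a = z_i - z_{i+1}` and `s = ±h`.
Clearing the denominator `a`, the equation `s_i^± f = y` becomes a linear relation between
`P (f^τ)`, `f^τ`, `f` and `y`. Replacing `f` by `g⁻¹ f` multiplies the `τ`-twisted terms by
`(g^τ)⁻¹`, so skew-invariance of `f` and invariance of `g⁻¹ f` are equivalent as soon as
`g^τ (s - a) = g (a + s)`. For `g = Ď` (resp. `D`) this holds because `τ` permutes the factors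
of the product, except the one indexed by the pair `(i, i+1)`, which it turns into the factor
`z_{i+1} - z_i + h` (resp. `z_i - z_{i+1} + h`).
-/

lemma permK_z {n : ℕ} (σ : Equiv.Perm (Fin n)) (i : Fin n) : permK σ (z i) = z (σ i) := by
  simp [permK, z]

lemma permK_hvar {n : ℕ} (σ : Equiv.Perm (Fin n)) : permK σ (hvar : K n) = hvar := by
  simp [permK, hvar]

lemma z_sub_z_ne_zero {n : ℕ} {i j : Fin n} (hij : i ≠ j) : z i - z j ≠ (0 : K n) := by
  refine sub_ne_zero.mpr fun h => hij ?_
  simpa using MvPolynomial.X_injective (IsFractionRing.injective _ (K n) h)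

lemma z_sub_z_add_hvar_ne_zero {n : ℕ} (i j : Fin n) : z i - z j + hvar ≠ (0 : K n) := by
  rw [z, z, hvar, ← map_sub, ← map_add, map_ne_zero_iff _ (IsFractionRing.injective _ (K n))]
  intro h
  simpa using congrArg (MvPolynomial.eval (Sum.elim 0 1)) h

section AdjacentTransposition

variable {n : ℕ} (i : ℕ) (hi : i + 1 < n)

lemma fin1_lt_fin2 : fin1 i hi < fin2 i hi := by
  simp [fin1, fin2, Fin.lt_def]

lemma swap_lt_swap {p q : Fin n} (hpq : p < q) (hne : (p, q) ≠ (fin1 i hi, fin2 i hi)) :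
    Equiv.swap (fin1 i hi) (fin2 i hi) p < Equiv.swap (fin1 i hi) (fin2 i hi) q := by
  rw [Equiv.swap_apply_def, Equiv.swap_apply_def]
  split_ifs <;> simp only [fin1, fin2, Fin.ext_iff, Fin.lt_def, ne_eq, Prod.mk.injEq] at * <;>
    omega

lemma swap_mem_erase_pairs {p : Fin n × Fin n}
    (hp : p ∈ (Finset.univ.filter (fun p : Fin n × Fin n => p.1 < p.2)).erase
      (fin1 i hi, fin2 i hi)) :
    (Equiv.swap (fin1 i hi) (fin2 i hi) p.1, Equiv.swap (fin1 i hi) (fin2 i hi) p.2) ∈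
      (Finset.univ.filter (fun p : Fin n × Fin n => p.1 < p.2)).erase (fin1 i hi, fin2 i hi) := by
  obtain ⟨hne, -, hlt⟩ := by simpa only [Finset.mem_erase, Finset.mem_filter] using hp
  refine Finset.mem_erase.mpr ⟨fun h => ?_, Finset.mem_filter.mpr
    ⟨Finset.mem_univ _, swap_lt_swap i hi hlt hne⟩⟩
  -- the only pair sent to `(i, i+1)` is `(i+1, i)`, which is not increasing
  rw [Prod.mk.injEq, Equiv.swap_apply_eq_iff, Equiv.swap_apply_eq_iff, Equiv.swap_apply_left,
    Equiv.swap_apply_right] at h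
  exact (fin1_lt_fin2 i hi).not_gt (h.1 ▸ h.2 ▸ hlt)

lemma prod_pairs_swap {M : Type*} [CommMonoid M] (G : Fin n → Fin n → M) :
    (∏ p ∈ Finset.univ.filter (fun p : Fin n × Fin n => p.1 < p.2),
        G (Equiv.swap (fin1 i hi) (fin2 i hi) p.1) (Equiv.swap (fin1 i hi) (fin2 i hi) p.2))
        * G (fin1 i hi) (fin2 i hi)
      = (∏ p ∈ Finset.univ.filter (fun p : Fin n × Fin n => p.1 < p.2), G p.1 p.2)
        * G (fin2 i hi) (fin1 i hi) := by
  set τ := Equiv.swap (fin1 i hi) (fin2 i hi)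
  have hmem : (fin1 i hi, fin2 i hi) ∈ Finset.univ.filter (fun p : Fin n × Fin n => p.1 < p.2) :=
    by simp [fin1_lt_fin2]
  have herase :
      ∏ p ∈ (Finset.univ.filter (fun p : Fin n × Fin n => p.1 < p.2)).erase
        (fin1 i hi, fin2 i hi), G (τ p.1) (τ p.2)
      = ∏ p ∈ (Finset.univ.filter (fun p : Fin n × Fin n => p.1 < p.2)).erase
        (fin1 i hi, fin2 i hi), G p.1 p.2 :=
    Finset.prod_equiv (τ.prodCongr τ) (fun p => ⟨swap_mem_erase_pairs i hi, fun h => by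
      simpa [τ] using swap_mem_erase_pairs i hi h⟩) (fun _ _ => rfl)
  rw [← Finset.prod_erase_mul _ _ hmem, ← Finset.prod_erase_mul _ _ hmem, herase]
  dsimp only
  rw [Equiv.swap_apply_left, Equiv.swap_apply_right, mul_assoc, mul_assoc, mul_comm (G _ _)]

lemma permK_Dcheck :
    permK (Equiv.swap (fin1 i hi) (fin2 i hi)) (Dcheck n) * (z (fin2 i hi) - z (fin1 i hi) + hvar)
      = Dcheck n * (z (fin1 i hi) - z (fin2 i hi) + hvar) := by
  rw [Dcheck, map_prod]
  simp only [map_add, map_sub, permK_z, permK_hvar]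
  exact prod_pairs_swap i hi (fun p q => z q - z p + hvar)

lemma permK_Dpoly :
    permK (Equiv.swap (fin1 i hi) (fin2 i hi)) (Dpoly n) * (z (fin1 i hi) - z (fin2 i hi) + hvar)
      = Dpoly n * (z (fin2 i hi) - z (fin1 i hi) + hvar) := by
  rw [Dpoly, map_prod]
  simp only [map_add, map_sub, permK_z, permK_hvar]
  exact prod_pairs_swap i hi (fun p q => z p - z q + hvar)

lemma sOp_apply_eq_iff {N : ℕ} (ε : Bool) (f : VV n N) (m : Fin n → Fin N) (y : K n) :
    sOp ε i hi f m = y ↔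
      (z (fin1 i hi) - z (fin2 i hi)) *
          permK (Equiv.swap (fin1 i hi) (fin2 i hi)) (f (m ∘ Equiv.swap (fin1 i hi) (fin2 i hi)))
        - sign' ε * permK (Equiv.swap (fin1 i hi) (fin2 i hi)) (f m)
      = (z (fin1 i hi) - z (fin2 i hi)) * y - sign' ε * f m := by
  have ha := z_sub_z_ne_zero (fin1_lt_fin2 i hi).ne
  rw [sOp, div_mul_eq_mul_div, ← add_div, div_eq_iff ha]
  constructor <;> intro h <;> linear_combination h

lemma sOp_inv_mul_eq_self_iff {N : ℕ} (ε : Bool) (f : VV n N) {g : K n} (hg : g ≠ 0)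
    (hrel : permK (Equiv.swap (fin1 i hi) (fin2 i hi)) g *
        (sign' ε - (z (fin1 i hi) - z (fin2 i hi)))
      = g * (z (fin1 i hi) - z (fin2 i hi) + sign' ε)) :
    sOp ε i hi (fun m => g⁻¹ * f m) = (fun m => g⁻¹ * f m) ↔ sOp ε i hi f = -f := by
  simp only [funext_iff, Pi.neg_apply, sOp_apply_eq_iff, map_mul, map_inv₀]
  refine forall_congr' fun m => ?_
  set τ := Equiv.swap (fin1 i hi) (fin2 i hi)
  set a := z (fin1 i hi) - z (fin2 i hi)
  have hgτ : permK τ g ≠ 0 := (map_ne_zero _).mpr hg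
  -- multiplying by `g^τ` turns `g⁻¹ (a - s)` into `-(a + s)`
  have htwist : permK τ g * (a * (g⁻¹ * f m) - sign' ε * (g⁻¹ * f m))
      = a * -f m - sign' ε * f m := by
    field_simp
    linear_combination -f m * hrel
  rw [← htwist, mul_left_comm a, mul_left_comm (sign' ε), ← mul_sub,
    inv_mul_eq_iff_eq_mul₀ hgτ]

end AdjacentTransposition

/-- `f` is skew-invariant with respect to the `S_n^+`-action iff `Ď⁻¹ f` is
invariant with respect to the `S_n^+`-action; and `f` is skew-invariant with respect to
the `S_n^−`-action iff `D⁻¹ f` is invariant with respect to the `S_n^−`-action. -/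
theorem statement5 (n N : ℕ) (f : VV n N) :
    ((∀ (i : ℕ) (hi : i + 1 < n), sOp true i hi f = -f) ↔
      (∀ (i : ℕ) (hi : i + 1 < n),
        sOp true i hi (fun m => (Dcheck n)⁻¹ * f m) = fun m => (Dcheck n)⁻¹ * f m)) ∧
    ((∀ (i : ℕ) (hi : i + 1 < n), sOp false i hi f = -f) ↔
      (∀ (i : ℕ) (hi : i + 1 < n),
        sOp false i hi (fun m => (Dpoly n)⁻¹ * f m) = fun m => (Dpoly n)⁻¹ * f m)) := by
  have hDcheck : Dcheck n ≠ 0 :=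
    Finset.prod_ne_zero_iff.mpr fun _ _ => z_sub_z_add_hvar_ne_zero _ _
  have hDpoly : Dpoly n ≠ 0 :=
    Finset.prod_ne_zero_iff.mpr fun _ _ => z_sub_z_add_hvar_ne_zero _ _
  constructor
  · refine forall₂_congr fun i hi => (sOp_inv_mul_eq_self_iff i hi true f hDcheck ?_).symm
    simp only [sign', if_true]
    linear_combination permK_Dcheck i hi
  · refine forall₂_congr fun i hi => (sOp_inv_mul_eq_self_iff i hi false f hDpoly ?_).symm
    simp only [sign', Bool.false_eq_true, if_false]
    linear_combination -permK_Dpoly i hi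

end GRTV
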